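/- arXiv:math/9704218 — 4 statements merged into one kernel-verified Lean document; each statement's English description precedes it below -/
import Mathlib

section
/- If Q_1, ..., Q_n are positive semidefinite symmetric n×n real matrices, then the mixed discriminant D(Q_1, ..., Q_n) is nonnegative. -/
open MvPolynomial Finset

/-- The mixed discriminant `D(Q₁,…,Qₙ) = ∂ⁿ/∂t₁⋯∂tₙ det(t₁Q₁ + ⋯ + tₙQₙ)`. -/
noncomputable def mixedDiscriminant {n : ℕ} (Q : Fin n → Matrix (Fin n) (Fin n) ℝ) : ℝ :=
  MvPolynomial.eval (fun _ => (0 : ℝ))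
    ((List.finRange n).foldl (fun p i => MvPolynomial.pderiv i p)
      (Matrix.det ((∑ i : Fin n, (MvPolynomial.X i : MvPolynomial (Fin n) ℝ) • (Q i).map (MvPolynomial.C : ℝ →+* MvPolynomial (Fin n) ℝ) :
        Matrix (Fin n) (Fin n) (MvPolynomial (Fin n) ℝ)))))

namespace MDaux
variable {n : ℕ}


variable {n : ℕ}

lemma foldl_pderiv_add (l : List (Fin n)) (p q : MvPolynomial (Fin n) ℝ) :
    l.foldl (fun p i => pderiv i p) (p + q)
      = l.foldl (fun p i => pderiv i p) p + l.foldl (fun p i => pderiv i p) q := by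
  induction l generalizing p q with
  | nil => rfl
  | cons i l ih => simp only [List.foldl_cons, map_add, ih]

lemma foldl_pderiv_zsmul (l : List (Fin n)) (c : ℤ) (p : MvPolynomial (Fin n) ℝ) :
    l.foldl (fun p i => pderiv i p) (c • p) = c • l.foldl (fun p i => pderiv i p) p := by
  induction l generalizing p with
  | nil => rfl
  | cons i l ih => simp only [List.foldl_cons, map_zsmul, ih]

lemma foldl_pderiv_sum {α : Type*} [DecidableEq α] (l : List (Fin n)) (s : Finset α)
    (p : α → MvPolynomial (Fin n) ℝ) :
    l.foldl (fun p i => pderiv i p) (∑ x ∈ s, p x)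
      = ∑ x ∈ s, l.foldl (fun p i => pderiv i p) (p x) := by
  induction s using Finset.induction with
  | empty => simp; induction l with
    | nil => rfl
    | cons i l ih => simpa using ih
  | insert _ _ h ih => rw [Finset.sum_insert h, foldl_pderiv_add, ih, Finset.sum_insert h]

lemma foldl_pderiv_monomial (l : List (Fin n)) (hl : l.Nodup) (d : Fin n →₀ ℕ) (c : ℝ) :
    l.foldl (fun p i => pderiv i p) (monomial d c)
      = monomial (d - ∑ i ∈ l.toFinset, Finsupp.single i 1)
          ((∏ i ∈ l.toFinset, (d i : ℝ)) * c) := by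
  induction l generalizing d c with
  | nil => simp
  | cons i l ih =>
    obtain ⟨hi, hl'⟩ := List.nodup_cons.mp hl
    rw [List.foldl_cons, pderiv_monomial, ih hl']
    have hmem : i ∉ l.toFinset := fun h => hi (List.mem_toFinset.mp h)
    have hd : (d - Finsupp.single i 1) - ∑ j ∈ l.toFinset, Finsupp.single j 1
        = d - ∑ j ∈ (i :: l).toFinset, Finsupp.single j 1 := by
      rw [List.toFinset_cons, Finset.sum_insert hmem, tsub_tsub]
    have hc : (∏ j ∈ l.toFinset, (((d - Finsupp.single i 1 : Fin n →₀ ℕ) j : ℕ) : ℝ)) * (c * (d i : ℝ))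
        = (∏ j ∈ (i :: l).toFinset, ((d j : ℕ) : ℝ)) * c := by
      rw [List.toFinset_cons, Finset.prod_insert hmem]
      have h2 : ∀ j ∈ l.toFinset, (((d - Finsupp.single i 1 : Fin n →₀ ℕ) j : ℕ) : ℝ) = ((d j : ℕ) : ℝ) := by
        intro j hj
        have hji : j ≠ i := fun h => hmem (h ▸ hj)
        rw [Finsupp.tsub_apply, Finsupp.single_apply, if_neg hji.symm, Nat.sub_zero]
      rw [Finset.prod_congr rfl h2]
      ring
    rw [hd, hc]



lemma eval0_monomial (d : Fin n →₀ ℕ) (c : ℝ) :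
    eval (fun _ => (0:ℝ)) (monomial d c) = if d = 0 then c else 0 := by
  rw [eval_monomial]
  split
  · next h => subst h; simp
  · next h =>
    obtain ⟨i, hi⟩ := Finsupp.ne_iff.mp h
    have hmem : i ∈ d.support := Finsupp.mem_support_iff.mpr (by simpa using hi)
    rw [Finsupp.prod, Finset.prod_eq_zero hmem (by simp [zero_pow (by simpa using hi)])]
    ring

lemma ones_apply (i : Fin n) : ((∑ j : Fin n, Finsupp.single j 1 : Fin n →₀ ℕ)) i = 1 := by
  rw [Finset.sum_apply']
  simp [Finsupp.single_apply]

lemma prod_X_eq_monomial (f : Fin n → Fin n) (s : Finset (Fin n)) :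
    (∏ b ∈ s, (X (f b) : MvPolynomial (Fin n) ℝ))
      = monomial (∑ b ∈ s, Finsupp.single (f b) 1) 1 := by
  induction s using Finset.induction with
  | empty => simp [monomial_zero']
  | insert _ _ h ih =>
    rw [Finset.prod_insert h, Finset.sum_insert h, ih, X, monomial_mul, one_mul]

lemma count_eq_one_iff (f : Fin n → Fin n) :
    (∀ i, ((∑ b : Fin n, Finsupp.single (f b) 1 : Fin n →₀ ℕ)) i = 1)
      ↔ Function.Bijective f := by
  rw [Function.bijective_iff_existsUnique]
  have key : ∀ i, ((∑ b : Fin n, Finsupp.single (f b) 1 : Fin n →₀ ℕ)) i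
      = (Finset.univ.filter (fun b => f b = i)).card := by
    intro i
    rw [Finset.sum_apply']
    rw [Finset.card_filter]
    exact Finset.sum_congr rfl fun b _ => by simp [Finsupp.single_apply]
  constructor
  · intro h i
    have := (key i) ▸ h i
    obtain ⟨b, hb⟩ := Finset.card_eq_one.mp this
    refine ⟨b, ?_, ?_⟩
    · have : b ∈ Finset.univ.filter (fun b => f b = i) := hb ▸ Finset.mem_singleton_self b
      exact (Finset.mem_filter.mp this).2
    · intro y hy
      have : y ∈ Finset.univ.filter (fun b => f b = i) := Finset.mem_filter.mpr ⟨Finset.mem_univ y, hy⟩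
      rw [hb, Finset.mem_singleton] at this; exact this
  · intro h i
    obtain ⟨b, hb, hu⟩ := h i
    rw [key i, Finset.card_eq_one]
    exact ⟨b, Finset.eq_singleton_iff_unique_mem.mpr
      ⟨Finset.mem_filter.mpr ⟨Finset.mem_univ b, hb⟩,
       fun y hy => hu y (Finset.mem_filter.mp hy).2⟩⟩

lemma sum_bijective_eq_sum_perm (F : (Fin n → Fin n) → ℝ) :
    (∑ f : Fin n → Fin n, if Function.Bijective f then F f else 0)
      = ∑ τ : Equiv.Perm (Fin n), F τ := by
  rw [← Finset.sum_filter]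
  refine (Finset.sum_bij (fun (τ : Equiv.Perm (Fin n)) _ => (τ : Fin n → Fin n)) ?_ ?_ ?_ ?_).symm
  · intro τ _; exact Finset.mem_filter.mpr ⟨Finset.mem_univ _, τ.bijective⟩
  · intro τ _ τ' _ h; exact Equiv.coe_fn_injective h
  · intro f hf
    exact ⟨Equiv.ofBijective f (Finset.mem_filter.mp hf).2, Finset.mem_univ _, rfl⟩
  · intro τ _; rfl


lemma Dlin_monomial' (d : Fin n →₀ ℕ) (c : ℝ)
    (hfold : (List.finRange n).foldl (fun p i => pderiv i p) (monomial d c)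
      = monomial (d - ∑ i : Fin n, Finsupp.single i 1) ((∏ i : Fin n, (d i : ℝ)) * c))
    (hones : ∀ i : Fin n, ((∑ j : Fin n, Finsupp.single j 1 : Fin n →₀ ℕ)) i = 1)
    (heval : ∀ (e : Fin n →₀ ℕ) (a : ℝ),
      eval (fun _ => (0:ℝ)) (monomial e a) = if e = 0 then a else 0) :
    eval (fun _ => (0:ℝ)) ((List.finRange n).foldl (fun p i => pderiv i p) (monomial d c))
      = if (∀ i, d i = 1) then c else 0 := by
  rw [hfold, heval]
  by_cases h : ∀ i, d i = 1
  · have hd : d = ∑ j : Fin n, Finsupp.single j 1 := Finsupp.ext fun i => by rw [h i, hones]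
    rw [if_pos h, if_pos (by rw [hd, tsub_self])]
    have : ∀ i ∈ (Finset.univ : Finset (Fin n)), ((d i : ℕ) : ℝ) = 1 := fun i _ => by rw [h i]; norm_num
    rw [Finset.prod_congr rfl this, Finset.prod_const_one, one_mul]
  · rw [if_neg h]
    push_neg at h
    obtain ⟨i, hi⟩ := h
    rcases Nat.lt_or_ge (d i) 1 with h0 | h2
    · have hz : (d i : ℝ) = 0 := by
        have : d i = 0 := by omega
        rw [this]; norm_num
      rw [Finset.prod_eq_zero (Finset.mem_univ i) hz, zero_mul, ite_self]
    · have h2' : 2 ≤ d i := by omega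
      have : (d - ∑ j : Fin n, Finsupp.single j 1 : Fin n →₀ ℕ) ≠ 0 := by
        intro hzero
        have := congrArg (fun f : Fin n →₀ ℕ => f i) hzero
        simp only [Finsupp.tsub_apply, Finsupp.coe_zero, Pi.zero_apply] at this
        rw [hones i] at this
        omega
      rw [if_neg this]



lemma Dlin_monomial (d : Fin n →₀ ℕ) (c : ℝ) :
    eval (fun _ => (0:ℝ)) ((List.finRange n).foldl (fun p i => pderiv i p) (monomial d c))
      = if (∀ i, d i = 1) then c else 0 := by
  refine Dlin_monomial' d c ?_ ones_apply eval0_monomial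
  rw [foldl_pderiv_monomial _ (List.nodup_finRange n), List.toFinset_finRange]

lemma mixedDiscriminant_eq_sum_perm (Q : Fin n → Matrix (Fin n) (Fin n) ℝ) :
    mixedDiscriminant Q
      = ∑ τ : Equiv.Perm (Fin n), Matrix.det (Matrix.of fun a b => Q (τ b) a b) := by
  unfold mixedDiscriminant
  have hprod : ∀ σ : Equiv.Perm (Fin n),
      (∏ b : Fin n, (∑ i : Fin n, (X i : MvPolynomial (Fin n) ℝ) • (Q i).map C) (σ b) b)
        = ∑ f : Fin n → Fin n,
            monomial (∑ b : Fin n, Finsupp.single (f b) 1) (∏ b : Fin n, Q (f b) (σ b) b) := by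
    intro σ
    have h1 : ∀ b : Fin n,
        (∑ i : Fin n, (X i : MvPolynomial (Fin n) ℝ) • (Q i).map C) (σ b) b
          = ∑ i : Fin n, X i * C (Q i (σ b) b) := fun b => by
      simp [Matrix.sum_apply, Matrix.smul_apply, Matrix.map_apply, smul_eq_mul]
    rw [Finset.prod_congr rfl fun b _ => h1 b, Finset.prod_univ_sum]
    rw [Fintype.piFinset_univ]
    refine Finset.sum_congr rfl fun f _ => ?_
    rw [Finset.prod_mul_distrib, prod_X_eq_monomial,
      ← map_prod (C : ℝ →+* MvPolynomial (Fin n) ℝ), C_apply, monomial_mul, add_zero, one_mul]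
  have hdet : (Matrix.det (∑ i : Fin n, (X i : MvPolynomial (Fin n) ℝ) • (Q i).map C))
      = ∑ σ : Equiv.Perm (Fin n), (Equiv.Perm.sign σ : ℤ) •
          ∑ f : Fin n → Fin n,
            monomial (∑ b : Fin n, Finsupp.single (f b) 1) (∏ b : Fin n, Q (f b) (σ b) b) := by
    rw [Matrix.det_apply]
    exact Finset.sum_congr rfl fun σ _ => by rw [Units.smul_def, hprod σ]
  rw [hdet, foldl_pderiv_sum, map_sum]
  have hterm : ∀ σ : Equiv.Perm (Fin n),
      eval (fun _ => (0:ℝ)) ((List.finRange n).foldl (fun p i => pderiv i p)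
        ((Equiv.Perm.sign σ : ℤ) • ∑ f : Fin n → Fin n,
          monomial (∑ b : Fin n, Finsupp.single (f b) 1) (∏ b : Fin n, Q (f b) (σ b) b)))
      = (Equiv.Perm.sign σ : ℤ) • ∑ τ : Equiv.Perm (Fin n), ∏ b : Fin n, Q (τ b) (σ b) b := by
    intro σ
    rw [foldl_pderiv_zsmul, map_zsmul, foldl_pderiv_sum, map_sum]
    congr 1
    have : ∀ f : Fin n → Fin n,
        eval (fun _ => (0:ℝ)) ((List.finRange n).foldl (fun p i => pderiv i p)
          (monomial (∑ b : Fin n, Finsupp.single (f b) 1) (∏ b : Fin n, Q (f b) (σ b) b)))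
        = if Function.Bijective f then (∏ b : Fin n, Q (f b) (σ b) b) else 0 := by
      intro f
      rw [Dlin_monomial]
      exact if_congr (count_eq_one_iff f) rfl rfl
    rw [Finset.sum_congr rfl fun f _ => this f]
    exact sum_bijective_eq_sum_perm _
  rw [Finset.sum_congr rfl fun σ (_ : σ ∈ Finset.univ) => hterm σ]
  have hrhs : ∀ τ : Equiv.Perm (Fin n),
      Matrix.det (Matrix.of fun a b => Q (τ b) a b)
        = ∑ σ : Equiv.Perm (Fin n), (Equiv.Perm.sign σ : ℤ) • ∏ b : Fin n, Q (τ b) (σ b) b := by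
    intro τ
    rw [Matrix.det_apply]
    exact Finset.sum_congr rfl fun σ _ => by rw [Units.smul_def]; rfl
  rw [Finset.sum_congr rfl fun τ (_ : τ ∈ (Finset.univ : Finset (Equiv.Perm (Fin n)))) => hrhs τ]
  rw [Finset.sum_comm]
  exact Finset.sum_congr rfl fun σ _ => smul_sum

lemma rank_one_sum_sq (v : Fin n → Fin n → ℝ) :
    ∑ τ : Equiv.Perm (Fin n),
        Matrix.det (Matrix.of fun b a => v (τ b) b * v (τ b) a)
      = (Matrix.det (Matrix.of fun b a => v b a)) ^ 2 := by
  have hterm : ∀ τ : Equiv.Perm (Fin n),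
      Matrix.det (Matrix.of fun b a => v (τ b) b * v (τ b) a)
        = (∏ b : Fin n, v (τ b) b) *
            ((Equiv.Perm.sign τ : ℤ) * Matrix.det (Matrix.of fun b a => v b a)) := by
    intro τ
    have h1 : Matrix.det (Matrix.of fun b a => v (τ b) b * v (τ b) a)
        = (∏ b : Fin n, v (τ b) b) * Matrix.det (Matrix.of fun b a => v (τ b) a) :=
      Matrix.det_mul_column (fun b => v (τ b) b) (Matrix.of fun b a => v (τ b) a)
    have h2 : (Matrix.of fun b a => v (τ b) a)
        = (Matrix.of fun b a => v b a).submatrix τ id := rfl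
    rw [h1, h2, Matrix.det_permute]
  rw [Finset.sum_congr rfl fun τ _ => hterm τ]
  have : ∑ τ : Equiv.Perm (Fin n),
      (∏ b : Fin n, v (τ b) b) * ((Equiv.Perm.sign τ : ℤ) * Matrix.det (Matrix.of fun b a => v b a))
      = (∑ τ : Equiv.Perm (Fin n), (Equiv.Perm.sign τ : ℤ) * ∏ b : Fin n, v (τ b) b) *
          Matrix.det (Matrix.of fun b a => v b a) := by
    rw [Finset.sum_mul]
    exact Finset.sum_congr rfl fun τ _ => by ring
  have hdet : (Matrix.of fun b a => v b a).det
      = ∑ τ : Equiv.Perm (Fin n), (Equiv.Perm.sign τ : ℤ) * ∏ b : Fin n, v (τ b) b := by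
    rw [Matrix.det_apply']; rfl
  rw [this, ← hdet, sq]

open scoped MatrixOrder in
theorem aux_nonneg (Q : Fin n → Matrix (Fin n) (Fin n) ℝ)
    (hQ : ∀ i, (Q i).PosSemidef) : 0 ≤ mixedDiscriminant Q := by
  classical
  set w : Fin n → Fin n → Fin n → ℝ := fun i k a => (CFC.sqrt (Q i)) a k with hwdef
  have hw : ∀ i a b, Q i a b = ∑ k, w i k a * w i k b := by
    intro i a b
    conv_lhs => rw [← CFC.sqrt_mul_sqrt_self (Q i) (hQ i).nonneg]
    rw [Matrix.mul_apply]
    refine Finset.sum_congr rfl fun k _ => ?_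
    have := (Matrix.nonneg_iff_posSemidef.mp (CFC.sqrt_nonneg (Q i))).1.apply k b
    rw [star_trivial] at this
    rw [← this]
  rw [mixedDiscriminant_eq_sum_perm]
  have step1 : ∀ τ : Equiv.Perm (Fin n),
      Matrix.det (Matrix.of fun a b => Q (τ b) a b)
        = ∑ g : Fin n → Fin n,
            Matrix.det (Matrix.of fun b a => w (τ b) (g b) b * w (τ b) (g b) a) := by
    intro τ
    have htr : Matrix.det (Matrix.of fun a b => Q (τ b) a b)
        = Matrix.det (Matrix.of fun b a => Q (τ b) a b) := by
      rw [← Matrix.det_transpose (Matrix.of fun b a => Q (τ b) a b)]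
      rfl
    rw [htr]
    have hrows : (Matrix.of fun b a => Q (τ b) a b)
        = Matrix.of fun b => ∑ k : Fin n, (w (τ b) k b) • (w (τ b) k) := by
      ext b a
      simp only [Matrix.of_apply, Finset.sum_apply, Pi.smul_apply, smul_eq_mul]
      rw [hw]
      exact Finset.sum_congr rfl fun k _ => mul_comm _ _
    rw [hrows]
    have := (Matrix.detRowAlternating :
        (Fin n → ℝ) [⋀^Fin n]→ₗ[ℝ] ℝ).toMultilinearMap.map_sum
      (g := fun b k => (w (τ b) k b) • (w (τ b) k))
    refine this.trans ?_
    refine Finset.sum_congr rfl fun g _ => ?_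
    congr 1
  rw [Finset.sum_congr rfl fun τ _ => step1 τ]
  have step2 : ∀ τ : Equiv.Perm (Fin n),
      (∑ g : Fin n → Fin n,
        Matrix.det (Matrix.of fun b a => w (τ b) (g b) b * w (τ b) (g b) a))
      = ∑ h : Fin n → Fin n,
        Matrix.det (Matrix.of fun b a => w (τ b) (h (τ b)) b * w (τ b) (h (τ b)) a) := by
    intro τ
    exact (Fintype.sum_equiv (Equiv.arrowCongr τ.symm (Equiv.refl (Fin n)))
      (fun h => Matrix.det (Matrix.of fun b a => w (τ b) (h (τ b)) b * w (τ b) (h (τ b)) a))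
      (fun g => Matrix.det (Matrix.of fun b a => w (τ b) (g b) b * w (τ b) (g b) a))
      (fun h => rfl)).symm
  rw [Finset.sum_congr rfl fun τ _ => step2 τ, Finset.sum_comm]
  refine Finset.sum_nonneg fun h _ => ?_
  have := rank_one_sum_sq (fun i => w i (h i))
  rw [this]
  exact sq_nonneg _


end MDaux

/-- The mixed discriminant of positive semidefinite matrices is nonnegative. -/
theorem mixedDiscriminant_nonneg {n : ℕ} (Q : Fin n → Matrix (Fin n) (Fin n) ℝ)
    (hQ : ∀ i, (Q i).PosSemidef) : 0 ≤ mixedDiscriminant Q :=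
  MDaux.aux_nonneg Q hQ
end

section
/- If x has the standard one-dimensional Gaussian distribution, then E((ln x²)²) = (8/√(2π)) ∫_0^∞ (ln² t) e^{-t²/2} dt ≤ 7. -/
open MeasureTheory ProbabilityTheory Real

open Set Filter
open scoped ENNReal NNReal

lemma exp_neg_le_quad {u : ℝ} (hu : 0 ≤ u) : Real.exp (-u) ≤ 1 - u + u ^ 2 / 2 := by
  have hd : ∀ x : ℝ, HasDerivAt (fun y => (1 - y + y ^ 2 / 2) * Real.exp y)
      (x ^ 2 / 2 * Real.exp x) x := by
    intro x
    have h1 : HasDerivAt (fun y : ℝ => 1 - y + y ^ 2 / 2) (-1 + x) x := by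
      have := ((hasDerivAt_id x).const_sub 1).add ((hasDerivAt_pow 2 x).div_const 2)
      convert this using 1
      · rfl
      · rfl
      · rfl
      ring
    have := h1.mul (Real.hasDerivAt_exp x)
    convert this using 1
    · rfl
    · rfl
    · rfl
    ring
  have hmono : MonotoneOn (fun y => (1 - y + y ^ 2 / 2) * Real.exp y) (Ici (0:ℝ)) := by
    apply monotoneOn_of_deriv_nonneg (convex_Ici 0)
    · exact ((continuous_const.sub continuous_id).add
        ((continuous_pow 2).div_const 2)).mul Real.continuous_exp |>.continuousOn
    · intro x _
      exact (hd x).differentiableAt.differentiableWithinAt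
    · intro x hx
      rw [interior_Ici] at hx
      rw [(hd x).deriv]
      positivity
  have h0 : (1:ℝ) ≤ (1 - u + u ^ 2 / 2) * Real.exp u := by
    have := hmono (self_mem_Ici) hu hu
    simpa using this
  have hepos := Real.exp_pos u
  have := mul_le_mul_of_nonneg_left h0 (Real.exp_pos (-u)).le
  rw [mul_one, mul_comm (Real.exp (-u)), mul_assoc, ← Real.exp_add] at this
  simpa using this

lemma log_sq_le_sub_one_sq {t : ℝ} (ht : 1 ≤ t) : (Real.log t) ^ 2 ≤ (t - 1) ^ 2 := by
  have h0 : 0 ≤ Real.log t := Real.log_nonneg ht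
  have h1 : Real.log t ≤ t - 1 := by
    have := Real.log_le_sub_one_of_pos (lt_of_lt_of_le one_pos ht)
    linarith
  nlinarith

lemma exp_neg_half_le : Real.exp (-(1:ℝ)/2) ≤ 0.6067 := by
  have h1 : Real.exp (-(1:ℝ)/2) * Real.exp (-(1:ℝ)/2) = Real.exp (-1) := by
    rw [← Real.exp_add]; norm_num
  have h5 : Real.exp (-1:ℝ) * Real.exp 1 = 1 := by rw [← Real.exp_add]; norm_num [Real.exp_zero]
  have h3 := Real.exp_one_gt_d9
  have h4 := Real.exp_pos (-(1:ℝ)/2)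
  nlinarith [sq_nonneg (Real.exp (-(1:ℝ)/2) - 0.6067), Real.exp_pos 1, Real.exp_pos (-1:ℝ)]

lemma le_exp_neg_three_half : (0.2231:ℝ) ≤ Real.exp (-(3:ℝ)/2) := by
  have hx : Real.exp ((3:ℝ)/2) * Real.exp ((3:ℝ)/2) = Real.exp 1 * Real.exp 1 * Real.exp 1 := by
    rw [← Real.exp_add, ← Real.exp_add, ← Real.exp_add]; norm_num
  have h5 : Real.exp (-(3:ℝ)/2) * Real.exp ((3:ℝ)/2) = 1 := by
    rw [← Real.exp_add]; norm_num [Real.exp_zero]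
  have h3 := Real.exp_one_lt_d9
  have hxpos := Real.exp_pos ((3:ℝ)/2)
  have hypos := Real.exp_pos (-(3:ℝ)/2)
  have hxle : Real.exp ((3:ℝ)/2) ≤ 4.4821 := by
    nlinarith [sq_nonneg (Real.exp ((3:ℝ)/2) - 4.4821), Real.exp_pos 1]
  nlinarith [mul_nonneg hypos.le (by linarith : (0:ℝ) ≤ 4.4821 - Real.exp ((3:ℝ)/2))]

lemma exp_neg_two_le : Real.exp (-(2:ℝ)) ≤ 0.1354 := by
  have h5 : Real.exp (-(2:ℝ)) * (Real.exp 1 * Real.exp 1) = 1 := by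
    rw [← Real.exp_add, ← Real.exp_add]; norm_num [Real.exp_zero]
  have h3 := Real.exp_one_gt_d9
  nlinarith [Real.exp_pos (-(2:ℝ)), Real.exp_pos 1]

lemma sqrt_two_pi_ge : (2.5066:ℝ) ≤ Real.sqrt (2 * π) := by
  rw [show (2.5066:ℝ) = Real.sqrt (2.5066 ^ 2) from (Real.sqrt_sq (by norm_num)).symm]
  apply Real.sqrt_le_sqrt
  nlinarith [Real.pi_gt_d6]

lemma integral_Ioc_zero_one_of_hasDerivAt {f F : ℝ → ℝ}
    (hd : ∀ x ∈ Ioc (0:ℝ) 1, HasDerivAt F (f x) x)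
    (hc : ContinuousOn f (Ioc 0 1))
    (hnn : ∀ x ∈ Ioc (0:ℝ) 1, 0 ≤ f x)
    (hlim : Tendsto F (nhdsWithin (0:ℝ) (Ioi 0)) (nhds 0)) :
    IntegrableOn f (Ioc (0:ℝ) 1) ∧ ∫ x in Ioc (0:ℝ) 1, f x = F 1 := by
  set a : ℕ → ℝ := fun n => ((n:ℝ) + 1)⁻¹ with ha_def
  have ha0 : ∀ n, 0 < a n := by intro n; positivity
  have ha1 : ∀ n, a n ≤ 1 := by
    intro n
    rw [ha_def]
    simp only []
    rw [inv_le_one_iff₀]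
    right
    linarith [Nat.cast_nonneg (α := ℝ) n]
  have hato : Tendsto a atTop (nhds 0) := by
    have := tendsto_one_div_add_atTop_nhds_zero_nat (𝕜 := ℝ)
    simpa [ha_def, one_div] using this
  have hsub : ∀ n, Icc (a n) 1 ⊆ Ioc (0:ℝ) 1 :=
    fun n x hx => ⟨lt_of_lt_of_le (ha0 n) hx.1, hx.2⟩
  have hccn : ∀ n, ContinuousOn f (Icc (a n) 1) := fun n => hc.mono (hsub n)
  have heq : ∀ n, ∫ x in Ioc (a n) 1, f x = F 1 - F (a n) := by
    intro n
    rw [← intervalIntegral.integral_of_le (ha1 n)]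
    apply intervalIntegral.integral_eq_sub_of_hasDerivAt
    · intro x hx
      rw [uIcc_of_le (ha1 n)] at hx
      exact hd x (hsub n hx)
    · apply ContinuousOn.intervalIntegrable
      rw [uIcc_of_le (ha1 n)]
      exact hccn n
  have hnorm : ∀ n, ∫ x in Ioc (a n) 1, ‖f x‖ = F 1 - F (a n) := by
    intro n
    rw [← heq n]
    apply setIntegral_congr_fun measurableSet_Ioc
    intro x hx
    exact norm_of_nonneg (hnn x ⟨lt_trans (ha0 n) hx.1, hx.2⟩)
  have hFa : Tendsto (fun n => F (a n)) atTop (nhds 0) := by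
    apply hlim.comp
    rw [tendsto_nhdsWithin_iff]
    exact ⟨hato, Eventually.of_forall (fun n => ha0 n)⟩
  have hintn : ∀ n, IntegrableOn f (Ioc (a n) 1) :=
    fun n => ((hccn n).integrableOn_Icc).mono_set Ioc_subset_Icc_self
  have hbound : ∀ᶠ n in atTop, ∫ x in Ioc (a n) 1, ‖f x‖ ≤ F 1 + 1 := by
    filter_upwards [hFa.eventually (eventually_gt_nhds (by norm_num : (-1:ℝ) < 0))] with n hn
    rw [hnorm n]
    linarith
  have hInt : IntegrableOn f (Ioc (0:ℝ) 1) :=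
    integrableOn_Ioc_of_intervalIntegral_norm_bounded_left hintn hato hbound
  refine ⟨hInt, ?_⟩
  have hcov : AECover ((volume : Measure ℝ).restrict (Ioc (0:ℝ) 1)) atTop
      (fun n => Ioc (a n) 1) := aecover_Ioc_of_Ioc hato tendsto_const_nhds
  have ht := hcov.integral_tendsto_of_countably_generated hInt
  have ht2 : Tendsto (fun n => F 1 - F (a n)) atTop
      (nhds (∫ x in Ioc (0:ℝ) 1, f x)) := by
    apply ht.congr
    intro n
    rw [Measure.restrict_restrict measurableSet_Ioc,
      inter_eq_left.2 (Ioc_subset_Ioc_left (ha0 n).le), heq n]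
  have ht3 : Tendsto (fun n => F 1 - F (a n)) atTop (nhds (F 1)) := by
    simpa using (tendsto_const_nhds (x := F 1)).sub hFa
  exact tendsto_nhds_unique ht2 ht3

noncomputable def Amon (m : ℕ) : ℝ → ℝ := fun t =>
  t ^ (m + 1) * ((Real.log t) ^ 2 / (m + 1) - 2 * Real.log t / ((m:ℝ) + 1) ^ 2
    + 2 / ((m:ℝ) + 1) ^ 3)

lemma hasDerivAt_Amon (m : ℕ) {x : ℝ} (hx : 0 < x) :
    HasDerivAt (Amon m) (x ^ m * (Real.log x) ^ 2) x := by
  have hl := Real.hasDerivAt_log hx.ne'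
  have hm1 : ((m:ℝ) + 1) ≠ 0 := by positivity
  have hinner : HasDerivAt (fun t => (Real.log t) ^ 2 / (m + 1)
      - 2 * Real.log t / ((m:ℝ) + 1) ^ 2 + 2 / ((m:ℝ) + 1) ^ 3)
      (2 * Real.log x * x⁻¹ / (m + 1) - 2 * x⁻¹ / ((m:ℝ) + 1) ^ 2) x := by
    have h1 := (hl.pow 2).div_const ((m:ℝ) + 1)
    have h2 := (hl.const_mul 2).div_const (((m:ℝ) + 1) ^ 2)
    have := (h1.sub h2).add_const (2 / ((m:ℝ) + 1) ^ 3)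
    convert this using 1
    · rfl
    · rfl
    · rfl
    ring
  have h := (hasDerivAt_pow (m + 1) x).mul hinner
  convert h using 1
  · rfl
  · rfl
  · rfl
  have hxne := hx.ne'
  push_cast
  field_simp
  ring

lemma tendsto_Amon (m : ℕ) : Tendsto (Amon m) (nhdsWithin (0:ℝ) (Ioi 0)) (nhds 0) := by
  have hlr : Tendsto (fun x : ℝ => Real.log x * x ^ (1/2 : ℝ))
      (nhdsWithin 0 (Ioi 0)) (nhds 0) := tendsto_log_mul_rpow_nhdsGT_zero (by norm_num)
  have hhalf : Tendsto (fun x : ℝ => x ^ (1/2 : ℝ)) (nhdsWithin 0 (Ioi 0)) (nhds 0) := by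
    have := (Real.continuousAt_rpow_const 0 (1/2) (Or.inr (by norm_num))).tendsto
    rw [Real.zero_rpow (by norm_num)] at this
    exact this.mono_left nhdsWithin_le_nhds
  have hpm : Tendsto (fun x : ℝ => x ^ m) (nhdsWithin 0 (Ioi 0)) (nhds (0 ^ m)) :=
    ((continuous_pow m).tendsto 0).mono_left nhdsWithin_le_nhds
  have hmul : ∀ x ∈ Ioi (0:ℝ), x ^ (1/2:ℝ) * x ^ (1/2:ℝ) = x := by
    intro x hx
    rw [← Real.rpow_add hx]
    norm_num
  have hsq : Tendsto (fun x : ℝ => x ^ (m+1) * (Real.log x) ^ 2)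
      (nhdsWithin 0 (Ioi 0)) (nhds 0) := by
    have h := (hlr.mul hlr).mul hpm
    rw [show ((0:ℝ) * 0 * 0 ^ m) = 0 by ring] at h
    apply h.congr'
    filter_upwards [self_mem_nhdsWithin] with x hx
    have h2 := hmul x hx
    calc Real.log x * x ^ (1/2:ℝ) * (Real.log x * x ^ (1/2:ℝ)) * x ^ m
        = (x ^ (1/2:ℝ) * x ^ (1/2:ℝ)) * x ^ m * (Real.log x) ^ 2 := by ring
      _ = x ^ (m+1) * (Real.log x) ^ 2 := by rw [h2]; ring
  have hlin : Tendsto (fun x : ℝ => x ^ (m+1) * Real.log x)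
      (nhdsWithin 0 (Ioi 0)) (nhds 0) := by
    have h := hlr.mul (hhalf.mul hpm)
    rw [show ((0:ℝ) * (0 * 0 ^ m)) = 0 by ring] at h
    apply h.congr'
    filter_upwards [self_mem_nhdsWithin] with x hx
    have h2 := hmul x hx
    calc Real.log x * x ^ (1/2:ℝ) * (x ^ (1/2:ℝ) * x ^ m)
        = (x ^ (1/2:ℝ) * x ^ (1/2:ℝ)) * x ^ m * Real.log x := by ring
      _ = x ^ (m+1) * Real.log x := by rw [h2]; ring
  have hp1 : Tendsto (fun x : ℝ => x ^ (m+1)) (nhdsWithin (0:ℝ) (Ioi 0)) (nhds 0) := by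
    have := ((continuous_pow (m+1)).tendsto 0).mono_left
      (nhdsWithin_le_nhds : nhdsWithin (0:ℝ) (Ioi 0) ≤ nhds 0)
    rwa [zero_pow (Nat.succ_ne_zero m)] at this
  have h := ((hsq.mul_const (1 / ((m:ℝ)+1))).sub
      (hlin.mul_const (2 / ((m:ℝ)+1) ^ 2))).add (hp1.mul_const (2 / ((m:ℝ)+1) ^ 3))
  rw [show ((0:ℝ) * (1 / ((m:ℝ)+1)) - 0 * (2 / ((m:ℝ)+1) ^ 2) + 0 * (2 / ((m:ℝ)+1) ^ 3)) = 0
    by ring] at h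
  apply h.congr
  intro x
  unfold Amon
  push_cast
  ring

noncomputable def F1 : ℝ → ℝ := fun t => Amon 0 t - (1/2) * Amon 2 t + (1/8) * Amon 4 t

lemma pieceA : IntegrableOn (fun t => (Real.log t)^2 * (1 - t^2/2 + t^4/8)) (Ioc (0:ℝ) 1)
    ∧ ∫ t in Ioc (0:ℝ) 1, (Real.log t)^2 * (1 - t^2/2 + t^4/8) = 2 - 1/27 + 1/500 := by
  have key := integral_Ioc_zero_one_of_hasDerivAt
    (f := fun t => (Real.log t)^2 * (1 - t^2/2 + t^4/8)) (F := F1)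
    ?_ ?_ ?_ ?_
  · obtain ⟨h1, h2⟩ := key
    refine ⟨h1, ?_⟩
    rw [h2]
    unfold F1 Amon
    simp [Real.log_one]
    norm_num
  · intro x hx
    have h := ((hasDerivAt_Amon 0 hx.1).sub ((hasDerivAt_Amon 2 hx.1).const_mul
      ((1:ℝ)/2))).add ((hasDerivAt_Amon 4 hx.1).const_mul ((1:ℝ)/8))
    convert h using 1
    · rfl
    · rfl
    · rfl
    ring
  · apply ContinuousOn.mul
    · apply ContinuousOn.pow
      apply Real.continuousOn_log.mono
      intro x hx
      exact ne_of_gt hx.1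
    · fun_prop
  · intro x hx
    have h1 : 0 < x := hx.1
    have h2 : x ≤ 1 := hx.2
    have : (0:ℝ) ≤ 1 - x^2/2 + x^4/8 := by nlinarith
    positivity
  · have h := ((tendsto_Amon 0).sub ((tendsto_Amon 2).const_mul ((1:ℝ)/2))).add
      ((tendsto_Amon 4).const_mul ((1:ℝ)/8))
    unfold F1
    convert h using 2
    norm_num

noncomputable def F2 : ℝ → ℝ := fun t => (2 - t) * Real.exp (-t^2/2)
  - 2 * Real.exp (1/2 - t) * ((t-1)^4/8 + (t-1)^3/2 + (t-1)^2 + 2*(t-1) + 3)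

noncomputable def g2 : ℝ → ℝ := fun t => (t^2 - 2*t - 1) * Real.exp (-t^2/2)
  + 2 * Real.exp (1/2 - t) * (1 - (t-1)^2/2 + (t-1)^4/8)

lemma hasDerivAt_F2 (x : ℝ) : HasDerivAt F2 (g2 x) x := by
  have h1 : HasDerivAt (fun t : ℝ => Real.exp (-t^2/2))
      (Real.exp (-x^2/2) * (-(2*x^(2-1))/2)) x :=
    ((hasDerivAt_pow 2 x).neg.div_const 2).exp
  have h2 : HasDerivAt (fun t : ℝ => Real.exp (1/2 - t))
      (Real.exp (1/2 - x) * (0 - 1)) x :=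
    ((hasDerivAt_const x (1/2:ℝ)).sub (hasDerivAt_id x)).exp
  have hA := ((hasDerivAt_id x).const_sub 2).mul h1
  have hpoly := (((((((hasDerivAt_id x).sub_const 1).pow 4).div_const 8).add
      ((((hasDerivAt_id x).sub_const 1).pow 3).div_const 2)).add
      (((hasDerivAt_id x).sub_const 1).pow 2)).add
      ((((hasDerivAt_id x).sub_const 1)).const_mul 2)).add_const 3
  have hB := (h2.mul hpoly).const_mul 2
  have h := hA.sub hB
  convert h using 1
  · rfl
  · rfl
  · funext t
    simp only [F2, id_eq, Pi.add_apply, Pi.mul_apply, Pi.sub_apply, Pi.pow_apply]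
    ring
  · unfold g2
    norm_num
    ring

lemma pieceB : ∫ t in Ioc (1:ℝ) 2, g2 t = 5 * Real.exp (-(1:ℝ)/2) - 53/4 * Real.exp (-(3:ℝ)/2) := by
  rw [← intervalIntegral.integral_of_le one_le_two]
  rw [intervalIntegral.integral_eq_sub_of_hasDerivAt (fun x _ => hasDerivAt_F2 x)
    (Continuous.intervalIntegrable (by unfold g2; fun_prop) 1 2)]
  unfold F2
  norm_num
  ring_nf

noncomputable def F3 : ℝ → ℝ := fun t => (2 - t) * Real.exp (-t^2/2) - Real.exp (2 - 2*t)

noncomputable def g3 : ℝ → ℝ := fun t => (t^2 - 2*t - 1) * Real.exp (-t^2/2)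
  + 2 * Real.exp (2 - 2*t)

lemma hasDerivAt_F3 (x : ℝ) : HasDerivAt F3 (g3 x) x := by
  have h1 : HasDerivAt (fun t : ℝ => Real.exp (-t^2/2))
      (Real.exp (-x^2/2) * (-(2*x^(2-1))/2)) x :=
    ((hasDerivAt_pow 2 x).neg.div_const 2).exp
  have h2 : HasDerivAt (fun t : ℝ => Real.exp (2 - 2*t))
      (Real.exp (2 - 2*x) * (0 - 2*1)) x :=
    ((hasDerivAt_const x (2:ℝ)).sub ((hasDerivAt_id x).const_mul 2)).exp
  have h := (((hasDerivAt_id x).const_sub 2).mul h1).sub h2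
  convert h using 1
  · rfl
  · rfl
  · rfl
  unfold g3
  norm_num
  ring

lemma tendsto_F3 : Tendsto F3 atTop (nhds 0) := by
  have h1 : Tendsto (fun t : ℝ => t * Real.exp (-t) + Real.exp (-t)) atTop (nhds 0) := by
    have ha := tendsto_pow_mul_exp_neg_atTop_nhds_zero 1
    have hb := Real.tendsto_exp_neg_atTop_nhds_zero
    simpa using ha.add hb
  apply squeeze_zero_norm' _ h1
  filter_upwards [eventually_ge_atTop (2:ℝ)] with t ht
  have e1 : Real.exp (-t^2/2) ≤ Real.exp (-t) := Real.exp_le_exp.2 (by nlinarith)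
  have e2 : Real.exp (2 - 2*t) ≤ Real.exp (-t) := Real.exp_le_exp.2 (by linarith)
  have hn : ‖F3 t‖ ≤ ‖(2 - t) * Real.exp (-t^2/2)‖ + ‖Real.exp (2 - 2*t)‖ := norm_sub_le _ _
  apply hn.trans
  apply add_le_add
  · rw [Real.norm_eq_abs, abs_mul, abs_of_nonpos (by linarith : 2 - t ≤ 0),
      abs_of_pos (Real.exp_pos _)]
    nlinarith [Real.exp_pos (-t^2/2), mul_le_mul_of_nonneg_left e1 (by linarith : (0:ℝ) ≤ t - 2)]
  · rw [Real.norm_eq_abs, abs_of_pos (Real.exp_pos _)]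
    exact e2

lemma g3_nonneg : ∀ x ∈ Ioi (2:ℝ), 0 ≤ g3 x := by
  intro x hx
  have hx2 : (2:ℝ) ≤ x := (le_of_lt hx)
  have e3 : Real.exp (-x^2/2) ≤ Real.exp (2 - 2*x) := Real.exp_le_exp.2 (by nlinarith)
  unfold g3
  nlinarith [mul_nonneg (sq_nonneg (x-1)) (Real.exp_pos (-x^2/2)).le]

lemma pieceC_int : IntegrableOn g3 (Ioi (2:ℝ)) :=
  integrableOn_Ioi_deriv_of_nonneg' (fun x _ => hasDerivAt_F3 x) g3_nonneg tendsto_F3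

lemma pieceC : ∫ t in Ioi (2:ℝ), g3 t = Real.exp (-(2:ℝ)) := by
  rw [integral_Ioi_of_hasDerivAt_of_nonneg' (fun x _ => hasDerivAt_F3 x) g3_nonneg tendsto_F3]
  unfold F3
  norm_num

noncomputable def G : ℝ → ℝ := fun t =>
  if t ≤ 1 then (Real.log t)^2 * (1 - t^2/2 + t^4/8) else if t ≤ 2 then g2 t else g3 t

lemma G_eq1 : EqOn G (fun t => (Real.log t)^2 * (1 - t^2/2 + t^4/8)) (Ioc (0:ℝ) 1) :=
  fun x hx => if_pos hx.2

lemma G_eq2 : EqOn G g2 (Ioc (1:ℝ) 2) := by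
  intro x hx
  unfold G
  rw [if_neg (not_le.2 hx.1), if_pos hx.2]

lemma G_eq3 : EqOn G g3 (Ioi (2:ℝ)) := by
  intro x hx
  unfold G
  rw [if_neg (by push_neg; linarith [mem_Ioi.1 hx]), if_neg (not_le.2 hx)]

lemma hG1 : IntegrableOn G (Ioc (0:ℝ) 1) :=
  (integrableOn_congr_fun G_eq1 measurableSet_Ioc).2 pieceA.1

lemma hG2 : IntegrableOn G (Ioc (1:ℝ) 2) :=
  (integrableOn_congr_fun G_eq2 measurableSet_Ioc).2
    ((Continuous.integrableOn_Ioc (by unfold g2; fun_prop)))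

lemma hG3 : IntegrableOn G (Ioi (2:ℝ)) :=
  (integrableOn_congr_fun G_eq3 measurableSet_Ioi).2 pieceC_int

lemma hGint : IntegrableOn G (Ioi (0:ℝ)) := by
  rw [← Ioc_union_Ioi_eq_Ioi (zero_le_one (α := ℝ))]
  apply hG1.union
  rw [← Ioc_union_Ioi_eq_Ioi (one_le_two (α := ℝ))]
  exact hG2.union hG3

lemma disj12 : Disjoint (Ioc (0:ℝ) 1) (Ioi 1) := by
  rw [Set.disjoint_left]
  rintro x ⟨_, h2⟩ h3
  exact absurd (mem_Ioi.1 h3) (not_lt.2 h2)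

lemma disj23 : Disjoint (Ioc (1:ℝ) 2) (Ioi 2) := by
  rw [Set.disjoint_left]
  rintro x ⟨_, h2⟩ h3
  exact absurd (mem_Ioi.1 h3) (not_lt.2 h2)

lemma hGval : ∫ t in Ioi (0:ℝ), G t
    = (2 - 1/27 + 1/500) + (5 * Real.exp (-(1:ℝ)/2) - 53/4 * Real.exp (-(3:ℝ)/2))
      + Real.exp (-(2:ℝ)) := by
  rw [← Ioc_union_Ioi_eq_Ioi (zero_le_one (α := ℝ)),
    setIntegral_union disj12 measurableSet_Ioi hG1 (by
      rw [← Ioc_union_Ioi_eq_Ioi (one_le_two (α := ℝ))]; exact hG2.union hG3),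
    ← Ioc_union_Ioi_eq_Ioi (one_le_two (α := ℝ)),
    setIntegral_union disj23 measurableSet_Ioi hG2 hG3]
  rw [setIntegral_congr_fun measurableSet_Ioc G_eq1,
    setIntegral_congr_fun measurableSet_Ioc G_eq2,
    setIntegral_congr_fun measurableSet_Ioi G_eq3]
  rw [pieceA.2, pieceB, pieceC]
  ring

lemma hdom : ∀ t ∈ Ioi (0:ℝ), (Real.log t)^2 * Real.exp (-t^2/2) ≤ G t := by
  intro t ht
  have ht0 : (0:ℝ) < t := ht
  by_cases h1 : t ≤ 1
  · rw [G_eq1 ⟨ht0, h1⟩]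
    apply mul_le_mul_of_nonneg_left _ (sq_nonneg _)
    have h := exp_neg_le_quad (u := t^2/2) (by positivity)
    rw [show -t^2/2 = -(t^2/2) by ring]
    calc Real.exp (-(t^2/2)) ≤ 1 - t^2/2 + (t^2/2)^2/2 := h
      _ = 1 - t^2/2 + t^4/8 := by ring
  · push_neg at h1
    have hL : (Real.log t)^2 ≤ (t-1)^2 := log_sq_le_sub_one_sq h1.le
    have hE := Real.exp_pos (-t^2/2)
    have hprod := mul_le_mul_of_nonneg_right hL hE.le
    by_cases h2 : t ≤ 2
    · rw [G_eq2 ⟨h1, h2⟩]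
      unfold g2
      have key2 : Real.exp (-t^2/2)
          = Real.exp (1/2 - t) * Real.exp (-((t-1)^2/2)) := by
        rw [← Real.exp_add]; congr 1; ring
      have key3 : Real.exp (-((t-1)^2/2)) ≤ 1 - (t-1)^2/2 + (t-1)^4/8 := by
        calc Real.exp (-((t-1)^2/2)) ≤ 1 - (t-1)^2/2 + ((t-1)^2/2)^2/2 :=
              exp_neg_le_quad (by positivity)
          _ = 1 - (t-1)^2/2 + (t-1)^4/8 := by ring
      nlinarith [hprod, key2, mul_le_mul_of_nonneg_left key3
        (by positivity : (0:ℝ) ≤ 2 * Real.exp (1/2 - t)), Real.exp_pos (1/2 - t)]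
    · push_neg at h2
      rw [G_eq3 h2]
      unfold g3
      have e4 : Real.exp (-t^2/2) ≤ Real.exp (2 - 2*t) := Real.exp_le_exp.2 (by nlinarith)
      nlinarith [hprod]

/-- For a standard Gaussian variable `x`,
`E((ln x²)²) = (8/√(2π)) ∫₀^∞ (ln² t) e^{-t²/2} dt ≤ 7`. -/
theorem gaussian_expectation_log_sq_squared :
    (∫ x : ℝ, (Real.log (x ^ 2)) ^ 2 ∂(gaussianReal 0 1)) =
        (8 / Real.sqrt (2 * π)) *
          ∫ t in Set.Ioi (0 : ℝ), (Real.log t) ^ 2 * Real.exp (-t ^ 2 / 2) ∧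
      (∫ x : ℝ, (Real.log (x ^ 2)) ^ 2 ∂(gaussianReal 0 1)) ≤ 7 := by
  have hpdfnn : ∀ x, 0 ≤ ProbabilityTheory.gaussianPDFReal 0 1 x :=
    ProbabilityTheory.gaussianPDFReal_nonneg 0 1
  have hmeas : Measurable fun x => Real.toNNReal (ProbabilityTheory.gaussianPDFReal 0 1 x) :=
    (ProbabilityTheory.measurable_gaussianPDFReal 0 1).real_toNNReal
  have h1 : (∫ x : ℝ, (Real.log (x ^ 2)) ^ 2 ∂(gaussianReal 0 1))
      = ∫ x : ℝ, ProbabilityTheory.gaussianPDFReal 0 1 x * (Real.log (x^2))^2 := by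
    rw [gaussianReal_of_var_ne_zero 0 one_ne_zero]
    have hh : ProbabilityTheory.gaussianPDF 0 1
        = fun x => ((Real.toNNReal (ProbabilityTheory.gaussianPDFReal 0 1 x) : ℝ≥0) : ℝ≥0∞) :=
      rfl
    rw [hh, integral_withDensity_eq_integral_smul hmeas]
    congr 1
    funext x
    rw [NNReal.smul_def, Real.coe_toNNReal _ (hpdfnn x), smul_eq_mul]
  have h2 : ∀ x : ℝ, ProbabilityTheory.gaussianPDFReal 0 1 x
      = (Real.sqrt (2*π))⁻¹ * Real.exp (-x^2/2) := by
    intro x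
    simp [ProbabilityTheory.gaussianPDFReal, NNReal.coe_one, mul_one, sub_zero]
  have h3 : ∫ x : ℝ, ProbabilityTheory.gaussianPDFReal 0 1 x * (Real.log (x^2))^2
      = (Real.sqrt (2*π))⁻¹ * ∫ x : ℝ, (Real.log (x^2))^2 * Real.exp (-x^2/2) := by
    rw [← integral_const_mul]
    congr 1
    funext x
    rw [h2]
    ring
  have h4 : ∫ x : ℝ, (Real.log (x^2))^2 * Real.exp (-x^2/2)
      = 2 * ∫ t in Ioi (0:ℝ), (Real.log (t^2))^2 * Real.exp (-t^2/2) := by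
    rw [← integral_comp_abs (f := fun t => (Real.log (t^2))^2 * Real.exp (-t^2/2))]
    congr 1
    funext x
    rw [sq_abs]
  have h5 : ∫ t in Ioi (0:ℝ), (Real.log (t^2))^2 * Real.exp (-t^2/2)
      = 4 * ∫ t in Ioi (0:ℝ), (Real.log t)^2 * Real.exp (-t^2/2) := by
    rw [← integral_const_mul]
    apply setIntegral_congr_fun measurableSet_Ioi
    intro t _
    simp only [Real.log_pow, Nat.cast_ofNat]
    ring
  have keyEq : (∫ x : ℝ, (Real.log (x ^ 2)) ^ 2 ∂(gaussianReal 0 1))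
      = (8 / Real.sqrt (2 * π)) *
        ∫ t in Set.Ioi (0 : ℝ), (Real.log t) ^ 2 * Real.exp (-t ^ 2 / 2) := by
    rw [h1, h3, h4, h5]
    rw [div_eq_mul_inv]
    ring
  refine ⟨keyEq, ?_⟩
  rw [keyEq]
  have hs : 0 < Real.sqrt (2 * π) := Real.sqrt_pos.2 (by positivity)
  set I := ∫ t in Set.Ioi (0 : ℝ), (Real.log t) ^ 2 * Real.exp (-t ^ 2 / 2) with hI
  have hIle : I ≤ ∫ t in Ioi (0:ℝ), G t := by
    apply integral_mono_of_nonneg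
    · exact ae_of_all _ (fun t => by positivity)
    · exact hGint
    · exact (ae_restrict_iff' measurableSet_Ioi).2 (ae_of_all _ hdom)
  have hIK : I ≤ (2 - 1/27 + 1/500) + (5 * Real.exp (-(1:ℝ)/2) - 53/4 * Real.exp (-(3:ℝ)/2))
      + Real.exp (-(2:ℝ)) := by
    rw [← hGval]
    exact hIle
  calc (8 / Real.sqrt (2 * π)) * I
      ≤ (8 / Real.sqrt (2 * π)) * ((2 - 1/27 + 1/500)
        + (5 * Real.exp (-(1:ℝ)/2) - 53/4 * Real.exp (-(3:ℝ)/2)) + Real.exp (-(2:ℝ))) := by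
        apply mul_le_mul_of_nonneg_left hIK (by positivity)
    _ ≤ 7 := by
        rw [div_mul_eq_mul_div, div_le_iff₀ hs]
        nlinarith [exp_neg_half_le, le_exp_neg_three_half, exp_neg_two_le, sqrt_two_pi_ge]
end

section
/- Let A = (a_ij) be an n×n nonnegative real matrix and let u_ij (1 ≤ i,j ≤ n) be i.i.d. standard Gaussian random variables. Define B = (b_ij) with b_ij = u_ij √(a_ij). Then E((det B)²) = per A. -/
open MeasureTheory ProbabilityTheory

section AuxPerDetSq
open Real Set


lemma gauss_repr : gaussianReal 0 1 =
    volume.withDensity fun x => ((gaussianPDFReal 0 1 x).toNNReal : ENNReal) := by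
  rw [gaussianReal_of_var_ne_zero 0 one_ne_zero]
  rfl

lemma pdf_form (x : ℝ) : gaussianPDFReal 0 1 x = (Real.sqrt (2 * π))⁻¹ * Real.exp (-(x ^ 2 / 2)) := by
  simp [gaussianPDFReal]; left; ring

lemma gauss_integral_eq (g : ℝ → ℝ) :
    ∫ x, g x ∂gaussianReal 0 1 = ∫ x, gaussianPDFReal 0 1 x * g x := by
  rw [gauss_repr, integral_withDensity_eq_integral_smul
    ((measurable_gaussianPDFReal 0 1).real_toNNReal) g]
  congr 1; funext x
  simp [NNReal.smul_def, Real.coe_toNNReal _ (gaussianPDFReal_nonneg 0 1 x)]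

lemma gauss_integrable_iff (g : ℝ → ℝ) :
    Integrable g (gaussianReal 0 1) ↔ Integrable (fun x => gaussianPDFReal 0 1 x * g x) := by
  rw [gauss_repr, integrable_withDensity_iff_integrable_smul
    ((measurable_gaussianPDFReal 0 1).real_toNNReal)]
  constructor <;> intro h <;> refine h.congr (Filter.Eventually.of_forall fun x => ?_) <;>
    simp [NNReal.smul_def, Real.coe_toNNReal _ (gaussianPDFReal_nonneg 0 1 x)]

lemma I1 : Integrable (fun x : ℝ => x * Real.exp (-(x ^ 2 / 2))) := by
  have := integrable_mul_exp_neg_mul_sq (b := 1/2) (by norm_num)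
  refine this.congr (Filter.Eventually.of_forall fun x => ?_)
  ring_nf

lemma I2 : Integrable (fun x : ℝ => x ^ 2 * Real.exp (-(x ^ 2 / 2))) := by
  have := integrable_rpow_mul_exp_neg_mul_sq (b := 1/2) (by norm_num) (s := ((2:ℕ):ℝ)) (by norm_num)
  simp only [Real.rpow_natCast] at this
  refine this.congr (Filter.Eventually.of_forall fun x => ?_)
  ring_nf

lemma V1 : ∫ x : ℝ, x * Real.exp (-(x ^ 2 / 2)) = 0 := by
  have h := (Measure.measurePreserving_neg (volume : Measure ℝ)).integral_comp
    measurableEmbedding_neg (fun x => x * Real.exp (-(x ^ 2 / 2)))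
  simp only [neg_sq, neg_mul, integral_neg] at h
  linarith

lemma V2 : ∫ x : ℝ, x ^ 2 * Real.exp (-(x ^ 2 / 2)) = Real.sqrt (2 * π) := by
  have key : ∫ x in Ioi (0:ℝ), x ^ 2 * Real.exp (-(x ^ 2 / 2)) = Real.sqrt (2 * π) / 2 := by
    have h := integral_rpow_mul_exp_neg_mul_rpow (p := ((2:ℕ):ℝ)) (q := ((2:ℕ):ℝ)) (b := 1/2)
      (by norm_num) (by norm_num) (by norm_num)
    simp only [Real.rpow_natCast] at h
    rw [show (((2:ℕ):ℝ)+1)/((2:ℕ):ℝ) = 1/2 + 1 by norm_num, Real.Gamma_add_one (by norm_num),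
      Real.Gamma_one_half_eq] at h
    have hb : ((1:ℝ)/2) ^ (-(((2:ℕ):ℝ)+1)/((2:ℕ):ℝ)) = 2 * Real.sqrt 2 := by
      rw [show (-(((2:ℕ):ℝ)+1)/((2:ℕ):ℝ)) = -(3/2) by norm_num, one_div,
        Real.inv_rpow (by norm_num), Real.rpow_neg (by norm_num), inv_inv,
        show (3:ℝ)/2 = 1 + 1/2 by norm_num,
        Real.rpow_add (by norm_num), Real.rpow_one, ← Real.sqrt_eq_rpow]
    rw [hb] at h
    calc ∫ x in Ioi (0:ℝ), x ^ 2 * Real.exp (-(x ^ 2 / 2))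
        = ∫ x in Ioi (0:ℝ), x ^ 2 * Real.exp (-(1/2) * x ^ 2) := by
          apply setIntegral_congr_fun measurableSet_Ioi; intro x _; ring_nf
      _ = Real.sqrt (2 * π) / 2 := by
          rw [h, Real.sqrt_mul (by norm_num)]; ring
  have hIic : ∫ x in Iic (0:ℝ), x ^ 2 * Real.exp (-(x ^ 2 / 2)) = Real.sqrt (2 * π) / 2 := by
    rw [← key, ← show ∫ x in Ioi (-(0:ℝ)), x ^ 2 * Real.exp (-(x ^ 2 / 2)) =
        ∫ x in Ioi (0:ℝ), x ^ 2 * Real.exp (-(x ^ 2 / 2)) by rw [neg_zero],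
      ← integral_comp_neg_Iic]
    simp
  rw [← intervalIntegral.integral_Iic_add_Ioi (b := 0) I2.integrableOn I2.integrableOn, key, hIic]
  ring

lemma gm1 : ∫ x, x ∂gaussianReal 0 1 = 0 := by
  rw [gauss_integral_eq]
  calc ∫ x : ℝ, gaussianPDFReal 0 1 x * x
      = ∫ x : ℝ, (Real.sqrt (2 * π))⁻¹ * (x * Real.exp (-(x ^ 2 / 2))) := by
        congr 1; funext x; rw [pdf_form]; ring
    _ = 0 := by rw [integral_const_mul, V1, mul_zero]

lemma gm2 : ∫ x, x ^ 2 ∂gaussianReal 0 1 = 1 := by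
  rw [gauss_integral_eq]
  calc ∫ x : ℝ, gaussianPDFReal 0 1 x * x ^ 2
      = ∫ x : ℝ, (Real.sqrt (2 * π))⁻¹ * (x ^ 2 * Real.exp (-(x ^ 2 / 2))) := by
        congr 1; funext x; rw [pdf_form]; ring
    _ = 1 := by
        rw [integral_const_mul, V2, inv_mul_cancel₀]
        positivity

lemma gpow_integrable (e : ℕ) (he : e ≤ 2) :
    Integrable (fun x : ℝ => x ^ e) (gaussianReal 0 1) := by
  interval_cases e
  · simpa using integrable_const (1 : ℝ) (μ := gaussianReal 0 1)
  · rw [gauss_integrable_iff]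
    refine (I1.const_mul (Real.sqrt (2 * π))⁻¹).congr (Filter.Eventually.of_forall fun x => ?_)
    simp only [pdf_form, pow_one]; ring
  · rw [gauss_integrable_iff]
    refine (I2.const_mul (Real.sqrt (2 * π))⁻¹).congr (Filter.Eventually.of_forall fun x => ?_)
    simp only [pdf_form]; ring

lemma integral_pi_prod {ι : Type*} [Fintype ι] {E : Type*} [MeasurableSpace E]
    (μ : Measure E) [SigmaFinite μ] (f : ι → E → ℝ) :
    ∫ x : ι → E, ∏ i, f i (x i) ∂(Measure.pi fun _ => μ) = ∏ i, ∫ x, f i x ∂μ := by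
  letI : MeasureSpace E := ⟨μ⟩
  haveI : SigmaFinite (volume : Measure E) := ‹SigmaFinite μ›
  exact MeasureTheory.integral_fintype_prod_eq_prod f

lemma integrable_pi_prod {ι : Type*} [Fintype ι] {E : Type*} [MeasurableSpace E]
    (μ : Measure E) [SigmaFinite μ] {f : ι → E → ℝ} (hf : ∀ i, Integrable (f i) μ) :
    Integrable (fun x : ι → E => ∏ i, f i (x i)) (Measure.pi fun _ => μ) := by
  letI : MeasureSpace E := ⟨μ⟩
  haveI : SigmaFinite (volume : Measure E) := ‹SigmaFinite μ›
  exact Integrable.fintype_prod hf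

/-- Exponent of `u i j` in the `(σ, τ)` term. -/
def expnt {n : ℕ} (σ τ : Equiv.Perm (Fin n)) (i j : Fin n) : ℕ :=
  (if σ i = j then 1 else 0) + (if τ i = j then 1 else 0)

lemma expnt_le {n : ℕ} (σ τ : Equiv.Perm (Fin n)) (i j : Fin n) : expnt σ τ i j ≤ 2 := by
  unfold expnt; split <;> split <;> norm_num

noncomputable def sgn {n : ℕ} (σ : Equiv.Perm (Fin n)) : ℝ := ((Equiv.Perm.sign σ : ℤ) : ℝ)

noncomputable def wt {n : ℕ} (A : Matrix (Fin n) (Fin n) ℝ) (σ : Equiv.Perm (Fin n)) : ℝ :=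
  ∏ i, Real.sqrt (A i (σ i))

noncomputable def trm {n : ℕ} (A : Matrix (Fin n) (Fin n) ℝ) (σ τ : Equiv.Perm (Fin n))
    (u : Fin n → Fin n → ℝ) : ℝ :=
  (sgn σ * sgn τ) * (wt A σ * wt A τ) * ∏ i, ∏ j, u i j ^ expnt σ τ i j

lemma trm_integrable {n : ℕ} (A : Matrix (Fin n) (Fin n) ℝ) (σ τ : Equiv.Perm (Fin n)) :
    Integrable (trm A σ τ)
      (Measure.pi fun _ : Fin n => Measure.pi fun _ : Fin n => gaussianReal 0 1) := by
  unfold trm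
  exact (integrable_pi_prod _ (fun i => integrable_pi_prod _
    (fun j => gpow_integrable _ (expnt_le σ τ i j)))).const_mul _

set_option maxHeartbeats 1000000 in
lemma trm_integral {n : ℕ} (A : Matrix (Fin n) (Fin n) ℝ) (σ τ : Equiv.Perm (Fin n)) :
    ∫ u, trm A σ τ u
        ∂(Measure.pi fun _ : Fin n => Measure.pi fun _ : Fin n => gaussianReal 0 1) =
      (sgn σ * sgn τ) * (wt A σ * wt A τ) *
        ∏ i, ∏ j, ∫ x, x ^ expnt σ τ i j ∂gaussianReal 0 1 := by
  unfold trm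
  rw [integral_const_mul]
  congr 1
  calc ∫ u : Fin n → Fin n → ℝ, ∏ i, ∏ j, u i j ^ expnt σ τ i j
        ∂(Measure.pi fun _ : Fin n => Measure.pi fun _ : Fin n => gaussianReal 0 1)
      = ∏ i, ∫ v : Fin n → ℝ, ∏ j, v j ^ expnt σ τ i j
          ∂(Measure.pi fun _ : Fin n => gaussianReal 0 1) :=
        integral_pi_prod (μ := Measure.pi fun _ : Fin n => gaussianReal 0 1)
          (f := fun i v => ∏ j, v j ^ expnt σ τ i j)
    _ = ∏ i, ∏ j, ∫ x, x ^ expnt σ τ i j ∂gaussianReal 0 1 :=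
        Finset.prod_congr rfl fun i _ => integral_pi_prod (μ := gaussianReal 0 1)
          (f := fun j x => x ^ expnt σ τ i j)

lemma trm_diag {n : ℕ} (A : Matrix (Fin n) (Fin n) ℝ) (hA : ∀ i j, 0 ≤ A i j)
    (σ : Equiv.Perm (Fin n)) :
    ∫ u, trm A σ σ u
        ∂(Measure.pi fun _ : Fin n => Measure.pi fun _ : Fin n => gaussianReal 0 1) =
      ∏ i, A i (σ i) := by
  rw [trm_integral]
  have h1 : ∀ i j : Fin n, ∫ x, x ^ expnt σ σ i j ∂gaussianReal 0 1 = 1 := by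
    intro i j
    by_cases h : σ i = j
    · have : expnt σ σ i j = 2 := by simp [expnt, h]
      rw [this, gm2]
    · have : expnt σ σ i j = 0 := by simp [expnt, h]
      rw [this]; simp
  simp only [h1, Finset.prod_const_one, mul_one]
  have hc : sgn σ * sgn σ = 1 := by
    rcases Int.units_eq_one_or (Equiv.Perm.sign σ) with h | h <;> simp [sgn, h]
  have hw : wt A σ * wt A σ = ∏ i, A i (σ i) := by
    rw [wt, ← Finset.prod_mul_distrib]
    exact Finset.prod_congr rfl fun i _ => Real.mul_self_sqrt (hA _ _)
  rw [hc, hw, one_mul]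

lemma trm_offdiag {n : ℕ} (A : Matrix (Fin n) (Fin n) ℝ) (σ τ : Equiv.Perm (Fin n))
    (hστ : σ ≠ τ) :
    ∫ u, trm A σ τ u
        ∂(Measure.pi fun _ : Fin n => Measure.pi fun _ : Fin n => gaussianReal 0 1) = 0 := by
  obtain ⟨i0, hi0⟩ : ∃ i, σ i ≠ τ i := by
    by_contra h; push_neg at h; exact hστ (Equiv.ext h)
  rw [trm_integral]
  have h0 : ∫ x, x ^ expnt σ τ i0 (σ i0) ∂gaussianReal 0 1 = 0 := by
    have : expnt σ τ i0 (σ i0) = 1 := by simp [expnt, hi0.symm]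
    rw [this]; simpa using gm1
  rw [Finset.prod_eq_zero (Finset.mem_univ i0)
    (Finset.prod_eq_zero (Finset.mem_univ (σ i0)) h0), mul_zero]

end AuxPerDetSq

/-- The permanent of an `n × n` real matrix. -/
noncomputable def permanent {n : ℕ} (A : Matrix (Fin n) (Fin n) ℝ) : ℝ :=
  ∑ σ : Equiv.Perm (Fin n), ∏ i : Fin n, A i (σ i)

/-- If `A` is nonnegative, `u_{ij}` are i.i.d. standard Gaussians and
`b_{ij} = u_{ij} √(a_{ij})`, then `E (det B)² = per A`. -/
theorem expectation_det_sq_eq_permanent {n : ℕ}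
    (A : Matrix (Fin n) (Fin n) ℝ) (hA : ∀ i j, 0 ≤ A i j) :
    ∫ u : Fin n → Fin n → ℝ,
        (Matrix.det (Matrix.of fun i j : Fin n => u i j * Real.sqrt (A i j))) ^ 2
        ∂(Measure.pi fun _ : Fin n => Measure.pi fun _ : Fin n => gaussianReal 0 1) =
      permanent A := by
  classical
  have hpt : ∀ u : Fin n → Fin n → ℝ,
      (Matrix.det (Matrix.of fun i j : Fin n => u i j * Real.sqrt (A i j))) ^ 2
        = ∑ σ : Equiv.Perm (Fin n), ∑ τ : Equiv.Perm (Fin n), trm A σ τ u := by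
    intro u
    have hdet : (Matrix.det (Matrix.of fun i j : Fin n => u i j * Real.sqrt (A i j)))
        = ∑ σ : Equiv.Perm (Fin n), sgn σ * (wt A σ * ∏ i, u i (σ i)) := by
      rw [← Matrix.det_transpose, Matrix.det_apply']
      refine Finset.sum_congr rfl fun σ _ => ?_
      simp only [Matrix.transpose_apply, Matrix.of_apply]
      rw [Finset.prod_mul_distrib, sgn, wt]
      ring
    rw [hdet, sq, Finset.sum_mul_sum]
    refine Finset.sum_congr rfl fun σ _ => Finset.sum_congr rfl fun τ _ => ?_
    have hprod : ∏ i, ∏ j, u i j ^ expnt σ τ i j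
        = (∏ i, u i (σ i)) * (∏ i, u i (τ i)) := by
      rw [← Finset.prod_mul_distrib]
      refine Finset.prod_congr rfl fun i _ => ?_
      have e1 : ∀ (ρ : Equiv.Perm (Fin n)),
          (∏ j, u i j ^ (if ρ i = j then 1 else 0)) = u i (ρ i) := by
        intro ρ
        have : ∀ j, u i j ^ (if ρ i = j then 1 else 0) = if ρ i = j then u i j else 1 := by
          intro j; split <;> simp
        simp only [this]
        simp
      calc ∏ j, u i j ^ expnt σ τ i j
          = (∏ j, u i j ^ (if σ i = j then 1 else 0)) *
            ∏ j, u i j ^ (if τ i = j then 1 else 0) := by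
            rw [← Finset.prod_mul_distrib]
            exact Finset.prod_congr rfl fun j _ => by rw [expnt, pow_add]
        _ = u i (σ i) * u i (τ i) := by rw [e1, e1]
    rw [trm, hprod]
    ring
  rw [integral_congr_ae (Filter.Eventually.of_forall hpt),
    integral_finset_sum _ (fun σ _ => integrable_finset_sum _ (fun τ _ => trm_integrable A σ τ))]
  unfold permanent
  refine Finset.sum_congr rfl fun σ _ => ?_
  rw [integral_finset_sum _ (fun τ _ => trm_integrable A σ τ),
    Finset.sum_eq_single_of_mem σ (Finset.mem_univ σ)
      (fun τ _ hne => trm_offdiag A σ τ (Ne.symm hne))]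
  exact trm_diag A hA σ
end

section
/- Let u_1, ..., u_m ∈ R^n and let {1,...,m} = J_1 ∪ ... ∪ J_n be a partition. Define Q_k = ∑_{i ∈ J_k} u_i ⊗ u_i. Then D(Q_1, ..., Q_n) = ∑ (det[u_{i_1}, ..., u_{i_n}])², where the sum is over all n-tuples (i_1, ..., i_n) with i_k ∈ J_k for each k. -/
open MvPolynomial Finset Equiv

section mdAux
variable {n : ℕ}

lemma foldl_pderiv_sum {β : Type*} (l : List (Fin n)) (s : Finset β)
    (f : β → MvPolynomial (Fin n) ℝ) :
    l.foldl (fun p i => pderiv i p) (∑ b ∈ s, f b) =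
      ∑ b ∈ s, l.foldl (fun p i => pderiv i p) (f b) := by
  induction l generalizing f with
  | nil => rfl
  | cons i l ih =>
    simp only [List.foldl_cons, map_sum]
    exact ih _

lemma foldl_pderiv_monomial (l : List (Fin n)) (hl : l.Nodup) (α : Fin n →₀ ℕ) (r : ℝ) :
    l.foldl (fun p i => pderiv i p) (monomial α r) =
      monomial (α - (l.map fun i => Finsupp.single i 1).sum)
        (r * (l.map fun i => (α i : ℝ)).prod) := by
  induction l generalizing α r with
  | nil => simp
  | cons i l ih =>
    obtain ⟨hi, hl'⟩ := List.nodup_cons.mp hl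
    simp only [List.foldl_cons, pderiv_monomial, List.map_cons, List.sum_cons, List.prod_cons]
    rw [ih hl']
    congr 1
    · rw [tsub_tsub]
    · have : (l.map fun j => (((α - Finsupp.single i 1 : Fin n →₀ ℕ) j : ℕ) : ℝ)) =
          l.map fun j => ((α j : ℕ) : ℝ) := by
        refine List.map_congr_left fun j hj => ?_
        have hji : i ≠ j := fun h => hi (h ▸ hj)
        rw [Finsupp.tsub_apply, Finsupp.single_eq_of_ne' hji, Nat.sub_zero]
      rw [this]; ring

lemma prod_X_eq_monomial (h : Fin n → Fin n) :
    (∏ b : Fin n, (X (h b) : MvPolynomial (Fin n) ℝ)) =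
      monomial (∑ b : Fin n, Finsupp.single (h b) 1) 1 := by
  classical
  induction (Finset.univ : Finset (Fin n)) using Finset.induction with
  | empty => simp
  | insert a s hb ih =>
    rw [Finset.prod_insert hb, Finset.sum_insert hb, ih, X, monomial_mul, one_mul]

lemma L_monomial (h : Fin n → Fin n) (r : ℝ) :
    eval (fun _ => (0 : ℝ)) ((List.finRange n).foldl (fun p i => pderiv i p)
      (monomial (∑ b : Fin n, Finsupp.single (h b) 1) r)) =
      if Function.Bijective h then r else 0 := by
  classical
  set α : Fin n →₀ ℕ := ∑ b : Fin n, Finsupp.single (h b) 1 with hα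
  rw [foldl_pderiv_monomial _ (List.nodup_finRange n)]
  have hones : ((List.finRange n).map fun i => Finsupp.single i 1).sum =
      ∑ i : Fin n, Finsupp.single i (1 : ℕ) := by
    rw [Fin.sum_univ_def]
  have hprod : ((List.finRange n).map fun i => ((α i : ℕ) : ℝ)).prod =
      ∏ i : Fin n, ((α i : ℕ) : ℝ) := by
    rw [Fin.prod_univ_def]
  rw [hones, hprod]
  by_cases hbij : Function.Bijective h
  · have hαones : α = ∑ i : Fin n, Finsupp.single i (1 : ℕ) :=
      Fintype.sum_bijective h hbij _ _ fun b => rfl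
    have hα1 : ∀ i, α i = 1 := by
      intro i
      rw [hαones, Finset.sum_apply']
      simp [Finsupp.single_apply]
    rw [if_pos hbij, ← hαones, tsub_self]
    simp [hα1]
  · have : ¬ Function.Surjective h := fun hs =>
      hbij (Finite.surjective_iff_bijective.mp hs)
    rw [Function.Surjective] at this
    push_neg at this
    obtain ⟨i, hi⟩ := this
    have hαi : α i = 0 := by
      rw [hα, Finset.sum_apply']
      exact Finset.sum_eq_zero fun b _ => Finsupp.single_eq_of_ne' (hi b)
    rw [if_neg hbij]
    have : (∏ j : Fin n, ((α j : ℕ) : ℝ)) = 0 :=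
      Finset.prod_eq_zero (Finset.mem_univ i) (by rw [hαi]; norm_num)
    rw [this, mul_zero, map_zero, map_zero]

end mdAux

lemma key_sum_sq {n m : ℕ} (u : Fin m → Fin n → ℝ) (f : Fin n → Fin m) :
    (∑ σ : Equiv.Perm (Fin n), ∑ π : Equiv.Perm (Fin n),
      ((Equiv.Perm.sign σ : ℤ) : ℝ) * ∏ b : Fin n, (u (f (π b)) (σ b) * u (f (π b)) b))
      = (Matrix.det (Matrix.of fun i k : Fin n => u (f k) i)) ^ 2 := by
  have hdetf : Matrix.det (Matrix.of fun i k : Fin n => u (f k) i)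
      = ∑ τ : Equiv.Perm (Fin n),
          ((Equiv.Perm.sign τ : ℤ) : ℝ) * ∏ k : Fin n, u (f k) (τ k) := by
    rw [Matrix.det_apply']
    rfl
  have hsign : ∀ τ ρ : Equiv.Perm (Fin n),
      ((Equiv.Perm.sign (τ * ρ⁻¹) : ℤ) : ℝ)
        = ((Equiv.Perm.sign τ : ℤ) : ℝ) * ((Equiv.Perm.sign ρ : ℤ) : ℝ) := by
    intro τ ρ
    rw [map_mul, Equiv.Perm.sign_inv]
    push_cast
    ring
  calc (∑ σ : Equiv.Perm (Fin n), ∑ π : Equiv.Perm (Fin n),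
        ((Equiv.Perm.sign σ : ℤ) : ℝ) * ∏ b : Fin n, (u (f (π b)) (σ b) * u (f (π b)) b))
      = ∑ p : Equiv.Perm (Fin n) × Equiv.Perm (Fin n),
          ((Equiv.Perm.sign p.1 : ℤ) : ℝ) *
            ∏ b : Fin n, (u (f (p.2 b)) (p.1 b) * u (f (p.2 b)) b) := by
        conv_rhs => rw [Fintype.sum_prod_type]
    _ = ∑ p : Equiv.Perm (Fin n) × Equiv.Perm (Fin n),
          (((Equiv.Perm.sign p.1 : ℤ) : ℝ) * ∏ k : Fin n, u (f k) (p.1 k)) *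
          (((Equiv.Perm.sign p.2 : ℤ) : ℝ) * ∏ k : Fin n, u (f k) (p.2 k)) := by
        refine (Fintype.sum_equiv
          ⟨fun p => (p.1 * p.2⁻¹, p.2⁻¹), fun p => (p.1 * p.2⁻¹, p.2⁻¹),
            fun p => by simp [mul_assoc], fun p => by simp [mul_assoc]⟩ _ _ ?_).symm
        rintro ⟨τ, ρ⟩
        show (((Equiv.Perm.sign τ : ℤ) : ℝ) * ∏ k : Fin n, u (f k) (τ k)) *
            (((Equiv.Perm.sign ρ : ℤ) : ℝ) * ∏ k : Fin n, u (f k) (ρ k))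
          = ((Equiv.Perm.sign (τ * ρ⁻¹) : ℤ) : ℝ) *
            ∏ b : Fin n, (u (f (ρ⁻¹ b)) ((τ * ρ⁻¹) b) * u (f (ρ⁻¹ b)) b)
        have hp : (∏ b : Fin n, (u (f (ρ⁻¹ b)) ((τ * ρ⁻¹) b) * u (f (ρ⁻¹ b)) b))
            = ∏ k : Fin n, (u (f k) (τ k) * u (f k) (ρ k)) := by
          rw [← Equiv.prod_comp ρ (fun b => u (f (ρ⁻¹ b)) ((τ * ρ⁻¹) b) * u (f (ρ⁻¹ b)) b)]
          refine Finset.prod_congr rfl fun k _ => ?_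
          simp [Equiv.Perm.mul_apply]
        rw [hp, hsign, Finset.prod_mul_distrib]
        ring
    _ = (∑ τ : Equiv.Perm (Fin n),
          ((Equiv.Perm.sign τ : ℤ) : ℝ) * ∏ k : Fin n, u (f k) (τ k)) *
        (∑ ρ : Equiv.Perm (Fin n),
          ((Equiv.Perm.sign ρ : ℤ) : ℝ) * ∏ k : Fin n, u (f k) (ρ k)) := by
        conv_lhs => rw [Fintype.sum_prod_type]
        rw [Finset.sum_mul_sum]
    _ = (Matrix.det (Matrix.of fun i k : Fin n => u (f k) i)) ^ 2 := by
        rw [hdetf, sq]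

set_option maxHeartbeats 2000000 in
/-- Let `u₁,…,u_m ∈ ℝⁿ`, let `J₁ ∪ ⋯ ∪ Jₙ` be a partition of `{1,…,m}` and
`Q_k = ∑_{i ∈ J_k} uᵢ ⊗ uᵢ`. Then `D(Q₁,…,Qₙ)` is the sum of `(det [u_{i₁},…,u_{iₙ}])²`
over all tuples having exactly one index of each color. -/
theorem mixedDiscriminant_counting {n m : ℕ} (u : Fin m → (Fin n → ℝ))
    (J : Fin n → Finset (Fin m))
    (hdisj : ∀ k l : Fin n, k ≠ l → Disjoint (J k) (J l))
    (hcover : ∀ i : Fin m, ∃ k : Fin n, i ∈ J k) :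
    mixedDiscriminant (fun k => ∑ i ∈ J k, Matrix.vecMulVec (u i) (u i)) =
      ∑ f ∈ Finset.univ.filter (fun f : Fin n → Fin m => ∀ k, f k ∈ J k),
        (Matrix.det (Matrix.of fun i k : Fin n => u (f k) i)) ^ 2 := by
  classical
  choose c hc using hcover
  have hcol : ∀ {i : Fin m} {k : Fin n}, i ∈ J k → c i = k := by
    intro i k hik
    by_contra hne
    exact (Finset.disjoint_left.mp (hdisj _ _ hne) (hc i)) hik
  have hJ : ∀ k : Fin n, Finset.univ.filter (fun i => c i = k) = J k := by
    intro k; ext i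
    simp only [Finset.mem_filter, Finset.mem_univ, true_and]
    exact ⟨fun h => h ▸ hc i, fun h => hcol h⟩
  set S : Finset (Fin n → Fin m) :=
    Finset.univ.filter (fun f : Fin n → Fin m => ∀ k, f k ∈ J k) with hS
  set s : Equiv.Perm (Fin n) → (Fin n → Fin m) → ℝ :=
    fun σ g => ((Equiv.Perm.sign σ : ℤ) : ℝ) * ∏ b : Fin n, (u (g b) (σ b) * u (g b) b)
    with hsdef
  -- entrywise description of the matrix
  have hM : ∀ a b : Fin n,
      (∑ k : Fin n, (X k : MvPolynomial (Fin n) ℝ) •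
          ((∑ i ∈ J k, Matrix.vecMulVec (u i) (u i)).map
            (C : ℝ →+* MvPolynomial (Fin n) ℝ))) a b
        = ∑ i : Fin m, (X (c i) : MvPolynomial (Fin n) ℝ) * C (u i a * u i b) := by
    intro a b
    rw [Matrix.sum_apply]
    have h1 : ∀ k : Fin n,
        ((X k : MvPolynomial (Fin n) ℝ) •
          ((∑ i ∈ J k, Matrix.vecMulVec (u i) (u i)).map
            (C : ℝ →+* MvPolynomial (Fin n) ℝ))) a b
          = ∑ i ∈ J k, (X k : MvPolynomial (Fin n) ℝ) * C (u i a * u i b) := by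
      intro k
      simp [Matrix.smul_apply, Matrix.map_apply, Matrix.sum_apply,
        Matrix.vecMulVec_apply, map_sum, Finset.mul_sum]
    rw [Finset.sum_congr rfl fun k _ => h1 k]
    calc ∑ k : Fin n, ∑ i ∈ J k, (X k : MvPolynomial (Fin n) ℝ) * C (u i a * u i b)
        = ∑ k : Fin n, ∑ i ∈ Finset.univ.filter (fun i => c i = k),
            (X (c i) : MvPolynomial (Fin n) ℝ) * C (u i a * u i b) := by
          refine Finset.sum_congr rfl fun k _ => ?_
          rw [hJ k]
          exact Finset.sum_congr rfl fun i hi => by rw [hcol hi]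
      _ = ∑ i : Fin m, (X (c i) : MvPolynomial (Fin n) ℝ) * C (u i a * u i b) :=
          Finset.sum_fiberwise _ _ _
  -- expansion of the determinant as a sum of monomials
  have hdet :
      Matrix.det (∑ k : Fin n, (X k : MvPolynomial (Fin n) ℝ) •
          ((∑ i ∈ J k, Matrix.vecMulVec (u i) (u i)).map
            (C : ℝ →+* MvPolynomial (Fin n) ℝ)))
        = ∑ σ : Equiv.Perm (Fin n), ∑ g : Fin n → Fin m,
            monomial (∑ b : Fin n, Finsupp.single (c (g b)) 1) (s σ g) := by
    rw [Matrix.det_apply']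
    refine Finset.sum_congr rfl fun σ _ => ?_
    rw [Finset.prod_congr rfl fun b _ => hM (σ b) b, Finset.prod_univ_sum, Finset.mul_sum]
    rw [show Fintype.piFinset (fun _ : Fin n => (Finset.univ : Finset (Fin m))) =
      Finset.univ from Fintype.piFinset_univ]
    refine Finset.sum_congr rfl fun g _ => ?_
    rw [Finset.prod_mul_distrib, prod_X_eq_monomial (fun b => c (g b)),
      ← map_prod (C : ℝ →+* MvPolynomial (Fin n) ℝ)
        (fun x => u (g x) (σ x) * u (g x) x) Finset.univ,
      mul_comm (monomial _ _) (C _), C_mul_monomial, mul_one,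
      show ((Equiv.Perm.sign σ : ℤ) : MvPolynomial (Fin n) ℝ) =
        C (((Equiv.Perm.sign σ : ℤ) : ℝ)) from (map_intCast (C : ℝ →+* MvPolynomial (Fin n) ℝ) _).symm,
      C_mul_monomial]
  -- apply the differential operator
  unfold mixedDiscriminant
  rw [hdet, foldl_pderiv_sum, map_sum]
  calc (∑ σ : Equiv.Perm (Fin n), eval (fun _ => (0:ℝ))
        ((List.finRange n).foldl (fun p i => pderiv i p)
          (∑ g : Fin n → Fin m, monomial (∑ b : Fin n, Finsupp.single (c (g b)) 1) (s σ g))))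
      = ∑ σ : Equiv.Perm (Fin n), ∑ g : Fin n → Fin m,
          (if Function.Bijective (c ∘ g) then s σ g else 0) := by
        refine Finset.sum_congr rfl fun σ _ => ?_
        rw [foldl_pderiv_sum, map_sum]
        exact Finset.sum_congr rfl fun g _ => L_monomial (c ∘ g) (s σ g)
    _ = ∑ σ : Equiv.Perm (Fin n),
          ∑ g ∈ Finset.univ.filter (fun g : Fin n → Fin m => Function.Bijective (c ∘ g)),
            s σ g := by
        exact Finset.sum_congr rfl fun σ _ => (Finset.sum_filter _ _).symm
    _ = ∑ σ : Equiv.Perm (Fin n),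
          ∑ p ∈ (Finset.univ : Finset (Equiv.Perm (Fin n))) ×ˢ S, s σ (p.2 ∘ ⇑p.1) := by
        refine Finset.sum_congr rfl fun σ _ => ?_
        refine Finset.sum_bij'
          (i := fun g hg => (Equiv.ofBijective _ (Finset.mem_filter.mp hg).2,
            g ∘ ⇑(Equiv.ofBijective _ (Finset.mem_filter.mp hg).2).symm))
          (j := fun p _ => p.2 ∘ ⇑p.1) ?_ ?_ ?_ ?_ ?_
        · intro g hg
          set e := Equiv.ofBijective _ (Finset.mem_filter.mp hg).2 with he
          refine Finset.mem_product.mpr ⟨Finset.mem_univ _, Finset.mem_filter.mpr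
            ⟨Finset.mem_univ _, fun k => ?_⟩⟩
          have h1 : c (g (e.symm k)) = k := e.apply_symm_apply k
          have := hc (g (e.symm k))
          rwa [h1] at this
        · intro p hp
          have hmem := (Finset.mem_filter.mp (Finset.mem_product.mp hp).2).2
          refine Finset.mem_filter.mpr ⟨Finset.mem_univ _, ?_⟩
          have hcomp : c ∘ (p.2 ∘ ⇑p.1) = ⇑p.1 :=
            funext fun b => hcol (hmem (p.1 b))
          rw [hcomp]
          exact p.1.bijective
        · intro g hg
          funext b
          exact congrArg g ((Equiv.ofBijective _ (Finset.mem_filter.mp hg).2).symm_apply_apply b)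
        · intro p hp
          have hmem := (Finset.mem_filter.mp (Finset.mem_product.mp hp).2).2
          have hcomp : ∀ b, c ((p.2 ∘ ⇑p.1) b) = p.1 b := fun b => hcol (hmem (p.1 b))
          have hfst : Equiv.ofBijective _
              (Finset.mem_filter.mp ((by
                refine Finset.mem_filter.mpr ⟨Finset.mem_univ _, ?_⟩
                have : c ∘ (p.2 ∘ ⇑p.1) = ⇑p.1 := funext hcomp
                rw [this]; exact p.1.bijective) :
                  (p.2 ∘ ⇑p.1) ∈ Finset.univ.filter
                    (fun g : Fin n → Fin m => Function.Bijective (c ∘ g)))).2 = p.1 := by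
            refine Equiv.ext fun b => ?_
            simpa [Equiv.ofBijective_apply] using hcomp b
          refine Prod.ext ?_ ?_
          · exact hfst
          · show (p.2 ∘ ⇑p.1) ∘ ⇑(Equiv.ofBijective _ _).symm = p.2
            rw [hfst]
            funext k
            simp
        · intro g hg
          set e := Equiv.ofBijective _ (Finset.mem_filter.mp hg).2 with he
          have : (g ∘ ⇑e.symm) ∘ ⇑e = g := by funext b; simp
          rw [this]
    _ = ∑ f ∈ S, ∑ σ : Equiv.Perm (Fin n), ∑ π : Equiv.Perm (Fin n), s σ (f ∘ ⇑π) := by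
        have hστ : ∀ σ : Equiv.Perm (Fin n),
            ∑ p ∈ (Finset.univ : Finset (Equiv.Perm (Fin n))) ×ˢ S, s σ (p.2 ∘ ⇑p.1)
              = ∑ f ∈ S, ∑ π : Equiv.Perm (Fin n), s σ (f ∘ ⇑π) := by
          intro σ
          rw [Finset.sum_product]
          exact Finset.sum_comm
        rw [Finset.sum_congr rfl fun σ _ => hστ σ]
        exact Finset.sum_comm
    _ = ∑ f ∈ S, (Matrix.det (Matrix.of fun i k : Fin n => u (f k) i)) ^ 2 := by
        exact Finset.sum_congr rfl fun f _ => key_sum_sq u f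
end
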